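/- arXiv:0905.1732 — 7 statements merged into one kernel-verified Lean document; each statement's English description precedes it below -/
import Mathlib

section
/- Let A be a unital C*-algebra and E a Hilbert C*-module over A. Let F be a subspace of E such that for every nonzero ζ ∈ F the inner product ⟪ζ, ζ⟫_A is invertible in A. Then every ξ ∈ E has at most one metric projection onto F: if ζ, ζ' ∈ F satisfy ‖ξ − ζ‖ = ‖ξ − ζ'‖ = dist(ξ, F), then ζ = ζ'. -/
open CStarModule InnerProductSpace

section CStarAlgebra

variable {A : Type*} [CStarAlgebra A] [PartialOrder A] [StarOrderedRing A] [Nontrivial A]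

lemma CStarAlgebra.exists_pos_algebraMap_le_of_isUnit {a : A} (ha : 0 ≤ a) (hu : IsUnit a) :
    ∃ r > 0, algebraMap ℝ A r ≤ a :=
  (CFC.exists_pos_algebraMap_le_iff ha.isSelfAdjoint).2 fun _ hx ↦
    (hu.isStrictlyPositive ha).spectrum_pos hx

lemma CStarAlgebra.norm_le_of_le_algebraMap {a : A} {r : ℝ} (ha : 0 ≤ a)
    (h : a ≤ algebraMap ℝ A r) : ‖a‖ ≤ r :=
  (le_algebraMap_iff_spectrum_le ha.isSelfAdjoint).1 h _ (norm_mem_spectrum_of_nonneg ha)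

end CStarAlgebra

namespace CStarModule

variable {A E : Type*} [CStarAlgebra A] [PartialOrder A]
  [SMul A E] [NormedAddCommGroup E] [NormedSpace ℂ E] [CStarModule A E]

lemma inner_add_add_self_add_inner_sub_sub_self (x y : E) :
    ⟪x + y, x + y⟫_A + ⟪x - y, x - y⟫_A = 2 • (⟪x, x⟫_A + ⟪y, y⟫_A) := by
  simp only [inner_add_left, inner_add_right, inner_sub_left, inner_sub_right]
  abel

variable [StarOrderedRing A]

lemma inner_self_le_algebraMap_of_norm_le {x : E} {d : ℝ} (hx : ‖x‖ ≤ d) :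
    ⟪x, x⟫_A ≤ algebraMap ℝ A (d ^ 2) := by
  have hd : 0 ≤ d := (norm_nonneg x).trans hx
  rw [← CStarAlgebra.norm_le_iff_le_algebraMap _ (by positivity) inner_self_nonneg,
    ← norm_sq_eq]
  gcongr

/-- By the parallelogram identity `⟪x + y, x + y⟫ ≤ 4 d² - ⟪x - y, x - y⟫`, and an invertible
positive element dominates a positive multiple of `1`. -/
lemma norm_add_lt_of_isUnit_inner_sub [Nontrivial A] {x y : E} {d : ℝ} (hx : ‖x‖ ≤ d)
    (hy : ‖y‖ ≤ d) (hxy : IsUnit ⟪x - y, x - y⟫_A) : ‖x + y‖ < 2 * d := by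
  obtain ⟨r, hr, hr_le⟩ := CStarAlgebra.exists_pos_algebraMap_le_of_isUnit inner_self_nonneg hxy
  have hbound : ⟪x + y, x + y⟫_A ≤ algebraMap ℝ A (4 * d ^ 2 - r) := calc
    ⟪x + y, x + y⟫_A = 2 • (⟪x, x⟫_A + ⟪y, y⟫_A) - ⟪x - y, x - y⟫_A :=
      eq_sub_of_add_eq (inner_add_add_self_add_inner_sub_sub_self x y)
    _ ≤ 2 • (algebraMap ℝ A (d ^ 2) + algebraMap ℝ A (d ^ 2)) - algebraMap ℝ A r := by
      gcongr
      · exact inner_self_le_algebraMap_of_norm_le hx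
      · exact inner_self_le_algebraMap_of_norm_le hy
    _ = algebraMap ℝ A (4 * d ^ 2 - r) := by
      rw [map_sub, map_mul, map_ofNat]
      noncomm_ring
  have hsq : ‖x + y‖ ^ 2 ≤ 4 * d ^ 2 - r := by
    rw [norm_sq_eq (A := A)]
    exact CStarAlgebra.norm_le_of_le_algebraMap inner_self_nonneg hbound
  nlinarith [norm_nonneg x]

end CStarModule

/-- **Uniqueness of metric projections onto "invertible" subspaces of Hilbert C*-modules.**
Let `A` be a unital C*-algebra and `E` a Hilbert C*-module over `A`.  Let `F` be a subspace
of `E` such that for every nonzero `ζ ∈ F` the inner product `⟪ζ, ζ⟫_A` is invertible in `A`.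
Then every `ξ ∈ E` has at most one metric projection onto `F`: if `ζ, ζ' ∈ F` satisfy
`‖ξ − ζ‖ = ‖ξ − ζ'‖ = dist(ξ, F)`, then `ζ = ζ'`. -/
theorem stmt_0 {A E : Type*} [CStarAlgebra A] [PartialOrder A] [StarOrderedRing A]
    [SMul A E] [NormedAddCommGroup E] [NormedSpace ℂ E] [CStarModule A E]
    (F : Submodule ℂ E)
    (hF : ∀ ζ : E, ζ ∈ F → ζ ≠ 0 → IsUnit (inner (𝕜 := A) ζ ζ))
    (ξ ζ ζ' : E) (hζ : ζ ∈ F) (hζ' : ζ' ∈ F)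
    (h1 : ‖ξ - ζ‖ = Metric.infDist ξ (F : Set E))
    (h2 : ‖ξ - ζ'‖ = Metric.infDist ξ (F : Set E)) :
    ζ = ζ' := by
  by_contra hne
  have hδ : ζ' - ζ ≠ 0 := sub_ne_zero.mpr (Ne.symm hne)
  have : Nontrivial A := nontrivial_of_ne _ _ (inner_self.not.mpr hδ)
  set m : E := (2⁻¹ : ℝ) • (ζ + ζ')
  have hm : (ξ - ζ) + (ξ - ζ') = (2 : ℝ) • (ξ - m) := by
    rw [smul_sub, smul_inv_smul₀ two_ne_zero, two_smul]
    abel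
  refine lt_irrefl (2 * Metric.infDist ξ F) ?_
  calc 2 * Metric.infDist ξ F ≤ 2 * ‖ξ - m‖ := by
        gcongr
        have hmF : m ∈ F := F.smul_of_tower_mem _ (F.add_mem hζ hζ')
        exact dist_eq_norm ξ m ▸ Metric.infDist_le_dist_of_mem hmF
    _ = ‖(ξ - ζ) + (ξ - ζ')‖ := by rw [hm, norm_smul, Real.norm_two]
    _ < 2 * Metric.infDist ξ F := norm_add_lt_of_isUnit_inner_sub h1.le h2.le
        (by rw [sub_sub_sub_cancel_left]; exact hF _ (F.sub_mem hζ' hζ) hδ)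
end

section
/- Let 𝒮 be a unital associative ℂ-algebra with a character ε, let H and K be left 𝒮-modules, let E₂ : K → H be an 𝒮-module homomorphism, and let c₀ : 𝒮 → H be an ε-cocycle such that c₀(x) = 0 implies x ∈ ℂ·1. If c : 𝒮 → K is an ε-cocycle with E₂ ∘ c = c₀, then the range of c is an 𝒮-submodule of K, and E₂ is injective on the range of c: if ζ lies in the range of c and E₂ζ = 0, then ζ = 0. -/
/-- **Injectivity of the target map on the range of a path cocycle** (first part of
Corollary 2.5 of the paper, abstract version).
Let `𝒮` be a unital associative ℂ-algebra with a character `ε`, let `H` and `K` be left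
`𝒮`-modules, let `E₂ : K → H` be an `𝒮`-module homomorphism, and let `c₀ : 𝒮 → H` be an
`ε`-cocycle such that `c₀ x = 0` implies `x ∈ ℂ·1`.  If `c : 𝒮 → K` is an `ε`-cocycle with
`E₂ ∘ c = c₀`, then the range of `c` is an `𝒮`-submodule of `K`, and `E₂` is injective on
the range of `c`. -/
theorem stmt_1 {S : Type*} [Ring S] [Algebra ℂ S]
    {H K : Type*} [AddCommGroup H] [Module S H] [Module ℂ H] [IsScalarTower ℂ S H]
    [AddCommGroup K] [Module S K] [Module ℂ K] [IsScalarTower ℂ S K]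
    (ε : S →ₐ[ℂ] ℂ) (E₂ : K →ₗ[S] H)
    (c₀ : S →ₗ[ℂ] H)
    (hc₀ : ∀ x y : S, c₀ (x * y) = x • c₀ y + ε y • c₀ x)
    (hc₀ker : ∀ x : S, c₀ x = 0 → ∃ a : ℂ, x = a • (1 : S))
    (c : S →ₗ[ℂ] K)
    (hc : ∀ x y : S, c (x * y) = x • c y + ε y • c x)
    (hE₂c : ∀ x : S, E₂ (c x) = c₀ x) :
    (∀ (s : S) (ζ : K), ζ ∈ LinearMap.range c → s • ζ ∈ LinearMap.range c) ∧
      (∀ ζ : K, ζ ∈ LinearMap.range c → E₂ ζ = 0 → ζ = 0) := by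
  have hc1 : c 1 = 0 := by
    have h := hc 1 1
    simp only [mul_one, one_smul, map_one] at h
    have : c 1 = c 1 + c 1 := by simpa using h
    have := left_eq_add.mp this
    exact this
  constructor
  · rintro s ζ ⟨x, rfl⟩
    refine ⟨s * x - (ε x : ℂ) • s, ?_⟩
    rw [map_sub, hc s x, map_smul]
    abel
  · rintro ζ ⟨x, rfl⟩ hz
    rw [hE₂c] at hz
    obtain ⟨a, rfl⟩ := hc₀ker x hz
    rw [map_smul, hc1, smul_zero]
end

section
/- Let 𝒮 be a unital associative ℂ-algebra with a character ε, let H and K be left 𝒮-modules, let E₂ : K → H be an 𝒮-module homomorphism, and let c₀ : 𝒮 → H be an ε-cocycle. Let K' ⊆ K be an 𝒮-submodule such that the restriction of E₂ to K' is injective and c₀(𝒮) ⊆ E₂(K'). Then there exists a unique ℂ-linear map c : 𝒮 → K' with E₂ ∘ c = c₀; moreover c is an ε-cocycle and its range equals the preimage of c₀(𝒮) under the restriction of E₂ to K'. -/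
/-- **Existence and uniqueness of path cocycles** (second part of Corollary 2.5 of the
paper, abstract version).
Let `𝒮` be a unital associative ℂ-algebra with a character `ε`, let `H` and `K` be left
`𝒮`-modules, let `E₂ : K → H` be an `𝒮`-module homomorphism, and let `c₀ : 𝒮 → H` be an
`ε`-cocycle.  Let `K' ⊆ K` be an `𝒮`-submodule such that the restriction of `E₂` to `K'`
is injective and `c₀(𝒮) ⊆ E₂(K')`.  Then there exists a unique ℂ-linear map `c : 𝒮 → K'`
with `E₂ ∘ c = c₀`; moreover `c` is an `ε`-cocycle and its range equals the preimage of
`c₀(𝒮)` under the restriction of `E₂` to `K'`. -/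
theorem stmt_2 {S : Type*} [Ring S] [Algebra ℂ S]
    {H K : Type*} [AddCommGroup H] [Module S H] [Module ℂ H] [IsScalarTower ℂ S H]
    [AddCommGroup K] [Module S K] [Module ℂ K] [IsScalarTower ℂ S K]
    (ε : S →ₐ[ℂ] ℂ) (E₂ : K →ₗ[S] H)
    (c₀ : S →ₗ[ℂ] H)
    (hc₀ : ∀ x y : S, c₀ (x * y) = x • c₀ y + ε y • c₀ x)
    (K' : Submodule S K)
    (hinj : ∀ ζ ∈ K', ∀ ζ' ∈ K', E₂ ζ = E₂ ζ' → ζ = ζ')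
    (hsurj : ∀ x : S, ∃ ζ ∈ K', E₂ ζ = c₀ x) :
    ∃ c : S →ₗ[ℂ] K,
      (∀ x : S, c x ∈ K') ∧ (∀ x : S, E₂ (c x) = c₀ x) ∧
      (∀ x y : S, c (x * y) = x • c y + ε y • c x) ∧
      (Set.range c = {ζ : K | ζ ∈ K' ∧ E₂ ζ ∈ Set.range c₀}) ∧
      (∀ c' : S →ₗ[ℂ] K, (∀ x : S, c' x ∈ K') → (∀ x : S, E₂ (c' x) = c₀ x) → c' = c) := by
  choose f hf hEf using hsurj
  have hsmulK : ∀ (a : ℂ) (ζ : K), a • ζ = (algebraMap ℂ S a) • ζ := fun a ζ =>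
    (algebraMap_smul S a ζ).symm
  have hmemC : ∀ (a : ℂ) {ζ : K}, ζ ∈ K' → a • ζ ∈ K' := by
    intro a ζ hζ
    rw [hsmulK]
    exact K'.smul_mem _ hζ
  have hE2C : ∀ (a : ℂ) (ζ : K), E₂ (a • ζ) = a • E₂ ζ := by
    intro a ζ
    rw [hsmulK, map_smul, algebraMap_smul]
  have hadd : ∀ x y, f (x + y) = f x + f y := by
    intro x y
    refine hinj _ (hf _) _ (K'.add_mem (hf x) (hf y)) ?_
    rw [map_add, hEf, hEf, hEf, map_add]
  have hsm : ∀ (a : ℂ) (x : S), f (a • x) = a • f x := by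
    intro a x
    refine hinj _ (hf _) _ (hmemC a (hf x)) ?_
    rw [hEf, hE2C, hEf, map_smul]
  refine ⟨{ toFun := f, map_add' := hadd, map_smul' := hsm }, hf, hEf, ?_, ?_, ?_⟩
  · intro x y
    refine hinj _ (hf _) _ (K'.add_mem (K'.smul_mem x (hf y)) (hmemC _ (hf x))) ?_
    simp only [LinearMap.coe_mk, AddHom.coe_mk]
    rw [hEf, hc₀, map_add, map_smul, hE2C, hEf, hEf]
  · ext ζ
    constructor
    · rintro ⟨x, rfl⟩
      exact ⟨hf x, x, (hEf x).symm⟩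
    · rintro ⟨hζ, x, hx⟩
      exact ⟨x, hinj _ (hf x) _ hζ (by rw [hEf, hx])⟩
  · intro c' hc' hE'
    ext x
    exact hinj _ (hc' x) _ (hf x) (by simp only [LinearMap.coe_mk, AddHom.coe_mk]; rw [hE' x, hEf])
end

section
/- Fix a real number a > 1 and define m_k = (a^{k+1} − a^{−(k+1)})/(a − a^{−1}) for k ∈ ℕ. Then there exists a unique bounded linear operator T on ℓ²(ℕ; ℂ) satisfying T e_k = √(m_1/2)·(√(m_k/m_{k+1})·e_{k+1} − √(m_{k+1}/m_k)·e_k) for every k ∈ ℕ, and T is bijective with bounded inverse S determined by S e_k = −m_k·√(2/m_1)·Σ_{i=k}^∞ e_i/√(m_i·m_{i+1}), the series converging in ℓ²(ℕ; ℂ). -/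
/-- The Hilbert space `ℓ²(ℕ; ℂ)`. -/
noncomputable abbrev L2N : Type := lp (fun _ : ℕ => ℂ) 2

/-- The standard orthonormal basis vector `e k` of `ℓ²(ℕ; ℂ)`. -/
noncomputable def stdVec (k : ℕ) : L2N := lp.single 2 k (1 : ℂ)

/-!
With `D` the diagonal operator with entries `√(m_{k+1}/m_k)` and `N` the weighted shift
`e_k ↦ √(m_k/m_{k+2}) e_{k+1}`, the operator is `T = -√(m₁/2) D (1 - N)`. Monotonicity of `m`
and the fusion rule `m₁ m_{k+1} = m_{k+2} + m_k` give `1 ≤ m_{k+1}/m_k ≤ m₁`, so `D` is bounded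
with bounded inverse, while `a² m_k ≤ m_{k+2}` gives `‖N‖ ≤ a⁻¹ < 1`, so `1 - N` is inverted by
the Neumann series `∑ Nⁿ`. Since `N` maps `e_k/√(m_k m_{k+1})` to `e_{k+1}/√(m_{k+1} m_{k+2})`,
the inverse `S = -√(2/m₁) (∑ Nⁿ) D⁻¹` sends `e_k` to the stated series.
-/

open scoped ENNReal lp

theorem memℓp_infty_of_norm_le {ι 𝕜 : Type*} [NormedField 𝕜] {f : ι → 𝕜} {C : ℝ}
    (hf : ∀ i, ‖f i‖ ≤ C) : Memℓp f ∞ :=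
  memℓp_infty ⟨C, Set.forall_mem_range.2 hf⟩

theorem Real.sqrt_div_mul_sqrt_div {x y : ℝ} (z : ℝ) (hx : 0 ≤ x) (hy : 0 < y) :
    √(x / y) * √(y / z) = √(x / z) := by
  rw [← Real.sqrt_mul (div_nonneg hx hy.le), div_mul_div_cancel₀ hy.ne']

namespace lp

variable {ι 𝕜 : Type*} [NontriviallyNormedField 𝕜] {p : ℝ≥0∞}

theorem norm_infty_mul_apply_le (w : ℓ^∞(ι, 𝕜)) (x : ι → 𝕜) (i : ι) :
    ‖w i * x i‖ ≤ ‖w‖ * ‖x i‖ := by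
  rw [norm_mul]
  exact mul_le_mul_of_nonneg_right (norm_apply_le_norm ENNReal.top_ne_zero w i) (norm_nonneg _)

theorem memℓp_infty_mul (w : ℓ^∞(ι, 𝕜)) (x : lp (fun _ : ι => 𝕜) p) :
    Memℓp (⇑w * ⇑x) p :=
  ((lp.memℓp x).norm.const_mul ‖w‖).mono (norm_infty_mul_apply_le w x)

def shiftRightSeq (x : ℕ → 𝕜) : ℕ → 𝕜
  | 0 => 0
  | j + 1 => x j

theorem hasSum_norm_rpow_shiftRightSeq (hp : 0 < p.toReal) (x : lp (fun _ : ℕ => 𝕜) p) :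
    HasSum (fun j => ‖shiftRightSeq x j‖ ^ p.toReal) (‖x‖ ^ p.toReal) := by
  rw [← hasSum_nat_add_iff' 1]
  simpa [shiftRightSeq, Real.zero_rpow hp.ne'] using hasSum_norm hp x

variable [Fact (1 ≤ p)]

noncomputable def diagonal (w : ℓ^∞(ι, 𝕜)) : lp (fun _ : ι => 𝕜) p →L[𝕜] lp (fun _ : ι => 𝕜) p :=
  LinearMap.mkContinuous
    { toFun x := ⟨⇑w * ⇑x, memℓp_infty_mul w x⟩
      map_add' x y := lp.ext <| mul_add (⇑w) x y
      map_smul' c x := lp.ext <| mul_left_comm (⇑w) (fun _ => c) x }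
    ‖w‖ fun x => by
      have hp : p ≠ 0 := (zero_lt_one.trans_le Fact.out).ne'
      rw [← norm_toNorm (x := x), ← Real.norm_of_nonneg (norm_nonneg w), ← norm_const_smul hp]
      exact norm_mono hp fun i => (norm_infty_mul_apply_le w x i).trans_eq
        (Real.norm_of_nonneg (by positivity)).symm

theorem diagonal_apply (w : ℓ^∞(ι, 𝕜)) (x : lp (fun _ : ι => 𝕜) p) (i : ι) :
    diagonal w x i = w i * x i := rfl

theorem norm_diagonal_le (w : ℓ^∞(ι, 𝕜)) :
    ‖(diagonal w : lp (fun _ : ι => 𝕜) p →L[𝕜] _)‖ ≤ ‖w‖ :=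
  LinearMap.mkContinuous_norm_le _ (norm_nonneg w) _

theorem diagonal_mul (v w : ℓ^∞(ι, 𝕜)) :
    (diagonal (v * w) : lp (fun _ : ι => 𝕜) p →L[𝕜] _) = diagonal v * diagonal w :=
  ContinuousLinearMap.ext fun x => lp.ext <| funext fun i => mul_assoc (v i) (w i) (x i)

theorem diagonal_one : (diagonal 1 : lp (fun _ : ι => 𝕜) p →L[𝕜] _) = 1 :=
  ContinuousLinearMap.ext fun x => lp.ext <| funext fun i => one_mul (x i)

theorem diagonal_single [DecidableEq ι] (w : ℓ^∞(ι, 𝕜)) (i : ι) (c : 𝕜) :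
    diagonal w (lp.single p i c) = lp.single p i (w i * c) := by
  ext j
  rw [diagonal_apply, lp.single_apply, lp.single_apply, Pi.single_apply, Pi.single_apply]
  split_ifs with h
  · rw [h]
  · exact mul_zero _

variable (p) in
noncomputable def shiftRight (hp : p ≠ ∞) : lp (fun _ : ℕ => 𝕜) p →L[𝕜] lp (fun _ : ℕ => 𝕜) p :=
  LinearMap.mkContinuous
    { toFun x := ⟨shiftRightSeq x, (memℓp_gen_iff (p.toReal_pos_iff_ne_top.2 hp)).2
        (hasSum_norm_rpow_shiftRightSeq (p.toReal_pos_iff_ne_top.2 hp) x).summable⟩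
      map_add' x y := lp.ext <| funext fun
        | 0 => (add_zero 0).symm
        | _ + 1 => rfl
      map_smul' c x := lp.ext <| funext fun
        | 0 => (smul_zero c).symm
        | _ + 1 => rfl }
    1 fun x => by
      rw [one_mul]
      exact norm_le_of_tsum_le (p.toReal_pos_iff_ne_top.2 hp) (norm_nonneg x)
        (hasSum_norm_rpow_shiftRightSeq (p.toReal_pos_iff_ne_top.2 hp) x).tsum_eq.le

variable (hp : p ≠ ∞)

theorem norm_shiftRight_le : ‖(shiftRight p hp : lp (fun _ : ℕ => 𝕜) p →L[𝕜] _)‖ ≤ 1 :=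
  LinearMap.mkContinuous_norm_le _ zero_le_one _

theorem shiftRight_single (i : ℕ) (c : 𝕜) :
    shiftRight p hp (lp.single p i c) = lp.single p (i + 1) c := by
  ext (_ | j)
  · simp [shiftRight, shiftRightSeq]
  · simp [shiftRight, shiftRightSeq, Pi.single_apply]

end lp

theorem ext_stdVec {T T' : L2N →L[ℂ] L2N} (h : ∀ k, T (stdVec k) = T' (stdVec k)) : T = T' :=
  lp.ext_continuousLinearMap ENNReal.ofNat_ne_top fun k => ContinuousLinearMap.ext_ring (h k)

theorem diagonal_stdVec (w : ℓ^∞(ℕ, ℂ)) (k : ℕ) : lp.diagonal w (stdVec k) = w k • stdVec k := by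
  rw [stdVec, lp.diagonal_single, ← smul_eq_mul, lp.single_smul]

theorem shiftRight_stdVec (k : ℕ) :
    lp.shiftRight 2 ENNReal.ofNat_ne_top (stdVec k) = stdVec (k + 1) :=
  lp.shiftRight_single _ k 1

/-- The quantum dimension `m_k` of the `k`-th irreducible corepresentation. -/
noncomputable def qdim (a : ℝ) (k : ℕ) : ℝ := (a ^ (k + 1) - (a ^ (k + 1))⁻¹) / (a - a⁻¹)

noncomputable def qdimRatio (a : ℝ) (i j : ℕ) : ℝ := √(qdim a i / qdim a j)

section QuantumDimension

variable {a : ℝ} (ha : 1 < a)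
include ha

theorem sub_inv_pos_of_one_lt : 0 < a - a⁻¹ := by
  linarith [inv_lt_one_of_one_lt₀ ha]

theorem qdim_pos (k : ℕ) : 0 < qdim a k :=
  div_pos (sub_inv_pos_of_one_lt (one_lt_pow₀ ha k.succ_ne_zero)) (sub_inv_pos_of_one_lt ha)

theorem qdim_le_qdim_succ (k : ℕ) : qdim a k ≤ qdim a (k + 1) := by
  have hx : 0 < a ^ (k + 1) := pow_pos (zero_lt_one.trans ha) _
  have hxy : a ^ (k + 1) ≤ a ^ (k + 2) := pow_le_pow_right₀ ha.le (Nat.le_succ _)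
  refine div_le_div_of_nonneg_right ?_ (sub_inv_pos_of_one_lt ha).le
  linarith [inv_anti₀ hx hxy]

theorem qdim_one : qdim a 1 = a + a⁻¹ := by
  rw [qdim, div_eq_iff (sub_inv_pos_of_one_lt ha).ne']
  ring

theorem qdim_one_mul_qdim_succ (k : ℕ) :
    qdim a 1 * qdim a (k + 1) = qdim a (k + 2) + qdim a k := by
  rw [qdim_one ha, qdim, qdim, qdim, ← add_div, mul_div_assoc']
  congr 1
  field_simp [(zero_lt_one.trans ha).ne']
  ring

theorem qdim_succ_le_qdim_one_mul (k : ℕ) : qdim a (k + 1) ≤ qdim a 1 * qdim a k := by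
  cases k with
  | zero => simp [qdim, (sub_inv_pos_of_one_lt ha).ne']
  | succ k => linarith [qdim_one_mul_qdim_succ ha k, qdim_pos ha k]

theorem sq_mul_qdim_le_qdim_add_two (k : ℕ) : a ^ 2 * qdim a k ≤ qdim a (k + 2) := by
  have hx : 0 < a ^ (k + 1) := pow_pos (zero_lt_one.trans ha) _
  have ha2 : 1 ≤ a ^ 2 := one_le_pow₀ ha.le
  rw [qdim, qdim, ← mul_div_assoc]
  refine div_le_div_of_nonneg_right ?_ (sub_inv_pos_of_one_lt ha).le
  rw [show a ^ (k + 2 + 1) = a ^ 2 * a ^ (k + 1) by ring, mul_inv, mul_sub]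
  have : (a ^ 2)⁻¹ * (a ^ (k + 1))⁻¹ ≤ a ^ 2 * (a ^ (k + 1))⁻¹ :=
    mul_le_mul_of_nonneg_right ((inv_le_one_of_one_le₀ ha2).trans ha2) (inv_pos.2 hx).le
  linarith

theorem qdimRatio_mul_qdimRatio (i j l : ℕ) :
    qdimRatio a i j * qdimRatio a j l = qdimRatio a i l :=
  Real.sqrt_div_mul_sqrt_div _ (qdim_pos ha i).le (qdim_pos ha j)

theorem qdimRatio_self (i : ℕ) : qdimRatio a i i = 1 := by
  rw [qdimRatio, div_self (qdim_pos ha i).ne', Real.sqrt_one]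

theorem qdimRatio_succ_le (k : ℕ) : qdimRatio a (k + 1) k ≤ √(qdim a 1) :=
  Real.sqrt_le_sqrt <| (div_le_iff₀ (qdim_pos ha k)).2 (qdim_succ_le_qdim_one_mul ha k)

theorem qdimRatio_le_one (k : ℕ) : qdimRatio a k (k + 1) ≤ 1 :=
  Real.sqrt_le_one.2 <| (div_le_one (qdim_pos ha _)).2 (qdim_le_qdim_succ ha k)

theorem qdimRatio_add_two_le (k : ℕ) : qdimRatio a k (k + 2) ≤ a⁻¹ := by
  refine Real.sqrt_le_iff.2 ⟨inv_nonneg.2 (zero_lt_one.trans ha).le, ?_⟩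
  rw [div_le_iff₀ (qdim_pos ha _), inv_pow, ← div_eq_inv_mul, le_div_iff₀ (by positivity)]
  exact mul_comm (qdim a k) (a ^ 2) ▸ sq_mul_qdim_le_qdim_add_two ha k

end QuantumDimension

section TargetOperator

variable {a : ℝ} (ha : 1 < a)
include ha

noncomputable def qdimRatioUp : ℓ^∞(ℕ, ℂ) :=
  ⟨fun k => (qdimRatio a (k + 1) k : ℂ), memℓp_infty_of_norm_le fun k =>
    (Complex.norm_of_nonneg (Real.sqrt_nonneg _)).trans_le (qdimRatio_succ_le ha k)⟩

noncomputable def qdimRatioDown : ℓ^∞(ℕ, ℂ) :=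
  ⟨fun k => (qdimRatio a k (k + 1) : ℂ), memℓp_infty_of_norm_le fun k =>
    (Complex.norm_of_nonneg (Real.sqrt_nonneg _)).trans_le (qdimRatio_le_one ha k)⟩

noncomputable def qdimShiftWeight : ℓ^∞(ℕ, ℂ) :=
  ⟨fun k => (qdimRatio a k (k + 2) : ℂ), memℓp_infty_of_norm_le fun k =>
    (Complex.norm_of_nonneg (Real.sqrt_nonneg _)).trans_le (qdimRatio_add_two_le ha k)⟩

theorem qdimRatioUp_apply (k : ℕ) : qdimRatioUp ha k = qdimRatio a (k + 1) k := rfl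

theorem qdimRatioDown_apply (k : ℕ) : qdimRatioDown ha k = qdimRatio a k (k + 1) := rfl

noncomputable def weightedShift : L2N →L[ℂ] L2N :=
  lp.shiftRight 2 ENNReal.ofNat_ne_top * lp.diagonal (qdimShiftWeight ha)

noncomputable def targetOp : L2N →L[ℂ] L2N :=
  -(√(qdim a 1 / 2) : ℂ) • (lp.diagonal (qdimRatioUp ha) * (1 - weightedShift ha))

noncomputable def targetOpInv : L2N →L[ℂ] L2N :=
  -(√(2 / qdim a 1) : ℂ) • ((∑' n, weightedShift ha ^ n) * lp.diagonal (qdimRatioDown ha))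

theorem norm_weightedShift_lt_one : ‖weightedShift ha‖ < 1 := by
  have hw : ‖qdimShiftWeight ha‖ ≤ a⁻¹ :=
    lp.norm_le_of_forall_le (inv_nonneg.2 (zero_lt_one.trans ha).le) fun k =>
      (Complex.norm_of_nonneg (Real.sqrt_nonneg _)).trans_le (qdimRatio_add_two_le ha k)
  calc ‖weightedShift ha‖
      ≤ ‖(lp.shiftRight 2 ENNReal.ofNat_ne_top : L2N →L[ℂ] L2N)‖ *
          ‖(lp.diagonal (qdimShiftWeight ha) : L2N →L[ℂ] L2N)‖ := norm_mul_le _ _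
    _ ≤ 1 * a⁻¹ := mul_le_mul (lp.norm_shiftRight_le _) ((lp.norm_diagonal_le _).trans hw)
        (norm_nonneg _) zero_le_one
    _ < 1 := by rw [one_mul]; exact inv_lt_one_of_one_lt₀ ha

theorem qdimRatioDown_mul_qdimRatioUp : qdimRatioDown ha * qdimRatioUp ha = 1 :=
  lp.ext <| funext fun k => by
    rw [lp.infty_coeFn_mul, Pi.mul_apply, qdimRatioDown_apply, qdimRatioUp_apply,
      lp.infty_coeFn_one, Pi.one_apply, ← Complex.ofReal_mul, qdimRatio_mul_qdimRatio ha,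
      qdimRatio_self ha, Complex.ofReal_one]

theorem sqrt_two_div_qdim_one_mul : √(2 / qdim a 1) * √(qdim a 1 / 2) = 1 := by
  rw [Real.sqrt_div_mul_sqrt_div _ zero_le_two (qdim_pos ha 1), div_self two_ne_zero,
    Real.sqrt_one]

theorem targetOpInv_mul_targetOp : targetOpInv ha * targetOp ha = 1 := by
  rw [targetOpInv, targetOp, smul_mul_smul, neg_mul_neg, ← Complex.ofReal_mul,
    sqrt_two_div_qdim_one_mul ha, Complex.ofReal_one, one_smul, mul_assoc,
    ← mul_assoc (lp.diagonal _), ← lp.diagonal_mul, qdimRatioDown_mul_qdimRatioUp,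
    lp.diagonal_one, one_mul, geom_series_mul_neg _ (norm_weightedShift_lt_one ha)]

theorem targetOp_mul_targetOpInv : targetOp ha * targetOpInv ha = 1 := by
  rw [targetOpInv, targetOp, smul_mul_smul, neg_mul_neg, ← Complex.ofReal_mul, mul_comm,
    sqrt_two_div_qdim_one_mul ha, Complex.ofReal_one, one_smul, mul_assoc, ← mul_assoc (1 - _),
    mul_neg_geom_series _ (norm_weightedShift_lt_one ha), one_mul, ← lp.diagonal_mul, mul_comm,
    qdimRatioDown_mul_qdimRatioUp, lp.diagonal_one]

theorem weightedShift_stdVec (k : ℕ) :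
    weightedShift ha (stdVec k) = (qdimRatio a k (k + 2) : ℂ) • stdVec (k + 1) := by
  rw [weightedShift, mul_apply_eq_comp, diagonal_stdVec, map_smul, shiftRight_stdVec]
  rfl

theorem targetOp_stdVec (k : ℕ) :
    targetOp ha (stdVec k) = (√(qdim a 1 / 2) : ℂ) •
      ((qdimRatio a k (k + 1) : ℂ) • stdVec (k + 1) - (qdimRatio a (k + 1) k : ℂ) • stdVec k) := by
  have hw : (qdimRatio a k (k + 2) : ℂ) * qdimRatio a (k + 2) (k + 1) = qdimRatio a k (k + 1) := by
    rw [← Complex.ofReal_mul, qdimRatio_mul_qdimRatio ha]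
  rw [targetOp, smul_apply, mul_apply_eq_comp, sub_apply, one_apply_eq_self, weightedShift_stdVec,
    map_sub, map_smul, diagonal_stdVec, diagonal_stdVec, qdimRatioUp_apply, qdimRatioUp_apply,
    smul_smul, hw]
  module

theorem weightedShift_pow_stdVec (n k : ℕ) :
    (weightedShift ha ^ n) ((((√(qdim a k * qdim a (k + 1)))⁻¹ : ℝ) : ℂ) • stdVec k) =
      (((√(qdim a (k + n) * qdim a (k + n + 1)))⁻¹ : ℝ) : ℂ) • stdVec (k + n) := by
  induction n with
  | zero => rfl
  | succ n ih =>
    have hq : (√(qdim a (k + n) * qdim a (k + n + 1)))⁻¹ * qdimRatio a (k + n) (k + n + 2) =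
        (√(qdim a (k + n + 1) * qdim a (k + n + 2)))⁻¹ := by
      have := qdim_pos ha (k + n)
      have := qdim_pos ha (k + n + 1)
      have := qdim_pos ha (k + n + 2)
      rw [← Real.sqrt_inv, ← Real.sqrt_inv, qdimRatio, ← Real.sqrt_mul (by positivity)]
      congr 1
      field_simp
    rw [pow_succ', mul_apply_eq_comp, ih, map_smul, weightedShift_stdVec, smul_smul,
      ← Complex.ofReal_mul, hq]
    rfl

theorem hasSum_targetOpInv_stdVec (k : ℕ) :
    HasSum (fun i : ℕ => if k ≤ i then
        ((-(qdim a k) * √(2 / qdim a 1) / √(qdim a i * qdim a (i + 1)) : ℝ) : ℂ) • stdVec i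
      else 0) (targetOpInv ha (stdVec k)) := by
  have hdown : qdimRatio a k (k + 1) = qdim a k * (√(qdim a k * qdim a (k + 1)))⁻¹ := by
    have := qdim_pos ha k
    have := qdim_pos ha (k + 1)
    rw [qdimRatio, eq_mul_inv_iff_mul_eq₀ (by positivity), ← Real.sqrt_mul (by positivity),
      show qdim a k / qdim a (k + 1) * (qdim a k * qdim a (k + 1)) = qdim a k * qdim a k by
        field_simp, Real.sqrt_mul_self (qdim_pos ha k).le]
  set v : L2N := (((√(qdim a k * qdim a (k + 1)))⁻¹ : ℝ) : ℂ) • stdVec k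
  have hS : targetOpInv ha (stdVec k) =
      (-(√(2 / qdim a 1) : ℂ) * qdim a k) • (∑' n, weightedShift ha ^ n) v := by
    rw [targetOpInv, smul_apply, mul_apply_eq_comp, diagonal_stdVec, qdimRatioDown_apply, hdown,
      Complex.ofReal_mul, ← smul_smul, map_smul, smul_smul]
  have hG : HasSum (fun n => (weightedShift ha ^ n) v) ((∑' n, weightedShift ha ^ n) v) :=
    (ContinuousLinearMap.apply ℂ L2N v).hasSum
      (summable_geometric_of_norm_lt_one (norm_weightedShift_lt_one ha)).hasSum
  rw [hS, ← hasSum_nat_add_iff' k, Finset.sum_eq_zero fun i hi =>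
    if_neg (Nat.not_le.2 (Finset.mem_range.1 hi)), sub_zero]
  convert hG.const_smul (-(√(2 / qdim a 1) : ℂ) * qdim a k) using 1
  funext n
  rw [if_pos (Nat.le_add_left k n), weightedShift_pow_stdVec, smul_smul, add_comm n k]
  congr 1
  push_cast
  ring

end TargetOperator

/-- **Invertibility of the hilbertian model of the target operator `E₂` on the classical
subspace of the quantum Cayley tree of `A_o(Q)`** (key step of Theorem 4.2 of the paper).
Fix `a > 1` and let `m_k = (a^{k+1} − a^{−(k+1)})/(a − a^{−1})`.  Then there is a unique
bounded operator `T` on `ℓ²(ℕ; ℂ)` with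
`T e_k = √(m₁/2)·(√(m_k/m_{k+1})·e_{k+1} − √(m_{k+1}/m_k)·e_k)` for all `k`, and `T` is
bijective with bounded inverse `S` determined by
`S e_k = −m_k·√(2/m₁)·Σ_{i≥k} e_i/√(m_i·m_{i+1})`, the series converging in `ℓ²`. -/
theorem stmt_5 (a : ℝ) (ha : 1 < a) (m : ℕ → ℝ)
    (hm : ∀ k : ℕ, m k = (a ^ (k + 1) - (a ^ (k + 1))⁻¹) / (a - a⁻¹)) :
    (∃! T : L2N →L[ℂ] L2N, ∀ k : ℕ,
        T (stdVec k) = (Real.sqrt (m 1 / 2) : ℂ) •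
          ((Real.sqrt (m k / m (k + 1)) : ℂ) • stdVec (k + 1)
            - (Real.sqrt (m (k + 1) / m k) : ℂ) • stdVec k)) ∧
    ∀ T : L2N →L[ℂ] L2N,
      (∀ k : ℕ, T (stdVec k) = (Real.sqrt (m 1 / 2) : ℂ) •
          ((Real.sqrt (m k / m (k + 1)) : ℂ) • stdVec (k + 1)
            - (Real.sqrt (m (k + 1) / m k) : ℂ) • stdVec k)) →
      Function.Bijective T ∧
      ∃ S : L2N →L[ℂ] L2N, (∀ x, S (T x) = x) ∧ (∀ x, T (S x) = x) ∧
        ∀ k : ℕ, HasSum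
          (fun i : ℕ => if k ≤ i then
              ((-(m k) * Real.sqrt (2 / m 1) / Real.sqrt (m i * m (i + 1)) : ℝ) : ℂ) • stdVec i
            else 0)
          (S (stdVec k)) := by
  obtain rfl : m = qdim a := funext hm
  have huniq : ∀ T : L2N →L[ℂ] L2N, (∀ k, T (stdVec k) = (√(qdim a 1 / 2) : ℂ) •
      ((qdimRatio a k (k + 1) : ℂ) • stdVec (k + 1) - (qdimRatio a (k + 1) k : ℂ) • stdVec k)) →
      T = targetOp ha :=
    fun T hT => ext_stdVec fun k => (hT k).trans (targetOp_stdVec ha k).symm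
  refine ⟨⟨targetOp ha, targetOp_stdVec ha, huniq⟩, fun T hT => ?_⟩
  obtain rfl := huniq T hT
  have hST (x : L2N) : targetOpInv ha (targetOp ha x) = x :=
    DFunLike.congr_fun (targetOpInv_mul_targetOp ha) x
  have hTS (x : L2N) : targetOp ha (targetOpInv ha x) = x :=
    DFunLike.congr_fun (targetOp_mul_targetOpInv ha) x
  exact ⟨Function.bijective_iff_has_inverse.2 ⟨_, hST, hTS⟩, targetOpInv ha, hST, hTS,
    hasSum_targetOpInv_stdVec ha⟩
end

section
/- Fix a real number a > 1 and define m_k = (a^{k+1} − a^{−(k+1)})/(a − a^{−1}) for k ∈ ℕ. There exists a constant D > 0 such that for all k, l ∈ ℕ the series Σ_{i=max(k,l)}^∞ 1/(m_i·m_{i+1}) converges and (2/m_1)·m_k·m_l·Σ_{i=max(k,l)}^∞ 1/(m_i·m_{i+1}) ≤ D·a^{−|k−l|}. -/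
/-- **Gram-matrix estimate for the inverse of the target operator** (proof of Theorem 4.2
of the paper).
Fix `a > 1` and let `m_k = (a^{k+1} − a^{−(k+1)})/(a − a^{−1})`.  There exists `D > 0` such
that for all `k, l ∈ ℕ` the series `Σ_{i ≥ max(k,l)} 1/(m_i·m_{i+1})` converges and
`(2/m₁)·m_k·m_l·Σ_{i ≥ max(k,l)} 1/(m_i·m_{i+1}) ≤ D·a^{−|k−l|}`. -/
theorem stmt_6 (a : ℝ) (ha : 1 < a) (m : ℕ → ℝ)
    (hm : ∀ k : ℕ, m k = (a ^ (k + 1) - (a ^ (k + 1))⁻¹) / (a - a⁻¹)) :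
    ∃ D : ℝ, 0 < D ∧ ∀ k l : ℕ,
      Summable (fun i : ℕ => if max k l ≤ i then (m i * m (i + 1))⁻¹ else 0) ∧
      (2 / m 1) * m k * m l *
          (∑' i : ℕ, if max k l ≤ i then (m i * m (i + 1))⁻¹ else 0)
        ≤ D * a ^ (-|(k : ℤ) - (l : ℤ)|) := by
  have ha0 : (0:ℝ) < a := lt_trans one_pos ha
  have hainv : a⁻¹ < 1 := inv_lt_one_of_one_lt₀ ha
  have hsub : 0 < a - a⁻¹ := by linarith
  set r : ℝ := (a ^ 2)⁻¹ with hr_def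
  have hr0 : 0 ≤ r := by positivity
  have hr1 : r < 1 := by
    rw [hr_def, inv_lt_one_iff₀]
    right; nlinarith
  -- lower bound : a ^ k ≤ m k
  have hlow : ∀ k : ℕ, a ^ k ≤ m k := by
    intro k
    rw [hm k, le_div_iff₀ hsub]
    have h1 : (1:ℝ) ≤ a ^ k := one_le_pow₀ ha.le
    have h2 : (a ^ (k+1))⁻¹ ≤ a ^ k * a⁻¹ := by
      rw [pow_succ, mul_inv]
      have : (a ^ k)⁻¹ ≤ a ^ k := by
        have := inv_le_one_of_one_le₀ h1
        linarith
      exact mul_le_mul_of_nonneg_right this (by positivity)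
    have h3 : a ^ k * (a - a⁻¹) = a ^ (k+1) - a ^ k * a⁻¹ := by ring
    rw [h3]; linarith
  have hmpos : ∀ k : ℕ, 0 < m k := fun k => lt_of_lt_of_le (by positivity) (hlow k)
  -- upper bound : m k ≤ C * a ^ k
  set C : ℝ := a / (a - a⁻¹) with hC_def
  have hC0 : 0 < C := by positivity
  have hup : ∀ k : ℕ, m k ≤ C * a ^ k := by
    intro k
    rw [hm k, div_le_iff₀ hsub, hC_def]
    have hp : (0:ℝ) < (a ^ (k+1))⁻¹ := by positivity
    have hh : a / (a - a⁻¹) * a ^ k * (a - a⁻¹) = a ^ (k+1) := by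
      rw [mul_right_comm, div_mul_cancel₀ a hsub.ne']; ring
    rw [hh]; linarith
  refine ⟨(2 / m 1) * C * C * (a⁻¹ * (1 - r)⁻¹), by
    have := hmpos 1
    have : (0:ℝ) < 1 - r := by linarith
    positivity, ?_⟩
  intro k l
  set M := max k l with hM
  set f : ℕ → ℝ := fun i => if M ≤ i then (m i * m (i + 1))⁻¹ else 0 with hf_def
  -- termwise bound
  have hterm : ∀ i : ℕ, (m i * m (i+1))⁻¹ ≤ a⁻¹ * r ^ i := by
    intro i
    have h1 : a ^ i * a ^ (i+1) ≤ m i * m (i+1) :=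
      mul_le_mul (hlow i) (hlow (i+1)) (by positivity) (hmpos i).le
    have h2 : (m i * m (i+1))⁻¹ ≤ (a ^ i * a ^ (i+1))⁻¹ :=
      inv_anti₀ (by positivity) h1
    have h3 : (a ^ i * a ^ (i+1))⁻¹ = a⁻¹ * r ^ i := by
      rw [hr_def]
      rw [mul_inv, ← inv_pow, ← inv_pow, ← inv_pow, pow_succ, pow_two]
      ring
    rw [← h3]; exact h2
  have hg_sum : Summable (fun i : ℕ => a⁻¹ * r ^ i) :=
    (summable_geometric_of_lt_one hr0 hr1).mul_left _
  have hf_nonneg : ∀ i : ℕ, 0 ≤ f i := by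
    intro i
    simp only [hf_def]
    split
    · exact inv_nonneg.mpr (mul_nonneg (hmpos i).le (hmpos (i+1)).le)
    · exact le_rfl
  have hf_le : ∀ i : ℕ, f i ≤ a⁻¹ * r ^ i := by
    intro i
    simp only [hf_def]
    split
    · exact hterm i
    · positivity
  have hsummable : Summable f := Summable.of_nonneg_of_le hf_nonneg hf_le hg_sum
  refine ⟨hsummable, ?_⟩
  -- shift the sum
  have hinj : Function.Injective (fun j : ℕ => j + M) := add_left_injective M
  have hshift : ∑' i, f i = ∑' j, f (j + M) := by
    refine (Function.Injective.tsum_eq hinj ?_).symm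
    intro x hx
    rcases le_or_gt M x with h | h
    · exact ⟨x - M, by simp [Nat.sub_add_cancel h]⟩
    · exfalso; apply hx; simp [hf_def, not_le.mpr h]
  have hS : ∑' i, f i ≤ a⁻¹ * r ^ M * (1 - r)⁻¹ := by
    rw [hshift]
    have hsum2 : Summable (fun j => f (j + M)) := hsummable.comp_injective hinj
    have hsum3 : Summable (fun j : ℕ => a⁻¹ * r ^ M * r ^ j) :=
      (summable_geometric_of_lt_one hr0 hr1).mul_left _
    calc ∑' j, f (j + M) ≤ ∑' j : ℕ, a⁻¹ * r ^ M * r ^ j := by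
          refine Summable.tsum_le_tsum (fun j => ?_) hsum2 hsum3
          calc f (j + M) ≤ a⁻¹ * r ^ (j + M) := hf_le (j + M)
            _ = a⁻¹ * r ^ M * r ^ j := by rw [pow_add]; ring
      _ = a⁻¹ * r ^ M * (1 - r)⁻¹ := by
          rw [tsum_mul_left, tsum_geometric_of_lt_one hr0 hr1]
  have hS0 : 0 ≤ ∑' i, f i := tsum_nonneg hf_nonneg
  have hm1 : 0 < 2 / m 1 := by have := hmpos 1; positivity
  -- power identity
  have hpow : a ^ k * a ^ l * r ^ M = a ^ (-|(k : ℤ) - (l : ℤ)|) := by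
    have hr' : r ^ M = a ^ (-(2 * (M:ℤ))) := by
      rw [zpow_neg, show (2 * (M:ℤ)) = ((2*M : ℕ) : ℤ) by push_cast; ring,
        zpow_natCast, pow_mul, ← inv_pow]
    rw [hr', ← zpow_natCast a k, ← zpow_natCast a l, ← zpow_add₀ ha0.ne',
      ← zpow_add₀ ha0.ne']
    congr 1
    rcases le_total k l with h | h
    · have hMe : M = l := max_eq_right h
      have habs : |(k:ℤ) - (l:ℤ)| = (l:ℤ) - k := by
        rw [abs_of_nonpos (by omega)]; ring
      rw [hMe, habs]; push_cast; ring
    · have hMe : M = k := max_eq_left h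
      have habs : |(k:ℤ) - (l:ℤ)| = (k:ℤ) - l := abs_of_nonneg (by omega)
      rw [hMe, habs]; push_cast; ring
  calc (2 / m 1) * m k * m l * (∑' i, f i)
      ≤ (2 / m 1) * (C * a ^ k) * (C * a ^ l) * (a⁻¹ * r ^ M * (1 - r)⁻¹) := by
        have h1 : (2 / m 1) * m k * m l ≤ (2 / m 1) * (C * a ^ k) * (C * a ^ l) := by
          have := hup k; have := hup l
          have h2 : 0 ≤ (2 / m 1) * m k := mul_nonneg hm1.le (hmpos k).le
          calc (2 / m 1) * m k * m l ≤ (2 / m 1) * (C * a ^ k) * m l := by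
                apply mul_le_mul_of_nonneg_right _ (hmpos l).le
                exact mul_le_mul_of_nonneg_left (hup k) hm1.le
            _ ≤ (2 / m 1) * (C * a ^ k) * (C * a ^ l) := by
                exact mul_le_mul_of_nonneg_left (hup l)
                  (mul_nonneg hm1.le (mul_nonneg hC0.le (by positivity)))
        exact mul_le_mul h1 hS hS0 (mul_nonneg (mul_nonneg hm1.le (by positivity)) (by positivity))
    _ = (2 / m 1) * C * C * (a⁻¹ * (1 - r)⁻¹) * a ^ (-|(k : ℤ) - (l : ℤ)|) := by
        rw [← hpow]; ring
end

section
/- Fix a real number a > 1 and define m_k = (a^{k+1} − a^{−(k+1)})/(a − a^{−1}) for k ∈ ℕ. Let T be the bounded operator on ℓ²(ℕ; ℂ) determined by T e_k = √(m_1/2)·(√(m_k/m_{k+1})·e_{k+1} − √(m_{k+1}/m_k)·e_k). Then for every k ≥ 1, T( √(2/m_1)·Σ_{i=0}^{k−1} e_i/√(m_i·m_{i+1}) ) = e_k/m_k − e_0. -/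
open Finset

/-!
Up to the scalar `√(m₁/2)`, `T` maps `e_i/√(m_i m_{i+1})` to the difference
`e_{i+1}/m_{i+1} − e_i/m_i`, so the image of the path vector is a telescoping sum, which
collapses to `e_k/m_k − e_0/m_0`, and `m_0 = 1`.
-/

lemma sub_inv_pos_of_one_lt_s8 {b : ℝ} (hb : 1 < b) : 0 < b - b⁻¹ := by
  linarith [inv_lt_one_of_one_lt₀ hb]

lemma inv_sqrt_mul_mul_sqrt_div {x y : ℝ} (hx : 0 < x) (hy : 0 < y) :
    (√(x * y))⁻¹ * √(x / y) = y⁻¹ := by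
  have hsx : √x ≠ 0 := (Real.sqrt_pos.2 hx).ne'
  have hsy : √y ≠ 0 := (Real.sqrt_pos.2 hy).ne'
  rw [Real.sqrt_mul hx.le, Real.sqrt_div' _ hy.le]
  field_simp
  exact (Real.sq_sqrt hy.le).symm

section Telescope

variable {E F : Type*} [AddCommGroup E] [Module ℂ E] [FunLike F E E] [LinearMapClass F ℂ E E]
  (T : F) (e : ℕ → E) {m : ℕ → ℝ} (c : ℂ)

lemma map_inv_sqrt_smul (hm : ∀ k, 0 < m k)
    (hT : ∀ k, T (e k) = c • ((√(m k / m (k + 1)) : ℂ) • e (k + 1)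
      - (√(m (k + 1) / m k) : ℂ) • e k)) (i : ℕ) :
    T (((√(m i * m (i + 1)))⁻¹ : ℂ) • e i)
      = c • (((m (i + 1))⁻¹ : ℂ) • e (i + 1) - ((m i)⁻¹ : ℂ) • e i) := by
  have hup : ((√(m i * m (i + 1)))⁻¹ : ℂ) * √(m i / m (i + 1)) = ((m (i + 1))⁻¹ : ℂ) := by
    exact_mod_cast inv_sqrt_mul_mul_sqrt_div (hm i) (hm (i + 1))
  have hdown : ((√(m i * m (i + 1)))⁻¹ : ℂ) * √(m (i + 1) / m i) = ((m i)⁻¹ : ℂ) := by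
    rw [mul_comm (m i)]
    exact_mod_cast inv_sqrt_mul_mul_sqrt_div (hm (i + 1)) (hm i)
  rw [map_smul, hT, smul_comm, smul_sub, smul_smul, smul_smul, hup, hdown]

lemma map_sum_inv_sqrt_smul (hm : ∀ k, 0 < m k)
    (hT : ∀ k, T (e k) = c • ((√(m k / m (k + 1)) : ℂ) • e (k + 1)
      - (√(m (k + 1) / m k) : ℂ) • e k)) (k : ℕ) :
    T (∑ i ∈ range k, ((√(m i * m (i + 1)))⁻¹ : ℂ) • e i)
      = c • (((m k)⁻¹ : ℂ) • e k - ((m 0)⁻¹ : ℂ) • e 0) := by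
  simp only [map_sum, map_inv_sqrt_smul T e c hm hT, ← smul_sum]
  rw [sum_range_sub (fun i => ((m i)⁻¹ : ℂ) • e i)]

end Telescope

/-- **The path formula in the classical subtree of the quantum Cayley tree of `A_o(Q)`**
(half-line case of `E₂(ζ_α) = ξ̃_α/m_α − ξ₀` from Section 4.1 of the paper).
Fix `a > 1`, let `m_k = (a^{k+1} − a^{−(k+1)})/(a − a^{−1})`, and let `T` be the bounded
operator on `ℓ²(ℕ; ℂ)` with `T e_k = √(m₁/2)·(√(m_k/m_{k+1})·e_{k+1} − √(m_{k+1}/m_k)·e_k)`.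
Then for every `k ≥ 1`,
`T(√(2/m₁)·Σ_{i<k} e_i/√(m_i·m_{i+1})) = e_k/m_k − e_0`. -/
theorem stmt_8 (a : ℝ) (ha : 1 < a) (m : ℕ → ℝ)
    (hm : ∀ k : ℕ, m k = (a ^ (k + 1) - (a ^ (k + 1))⁻¹) / (a - a⁻¹))
    (T : L2N →L[ℂ] L2N)
    (hT : ∀ k : ℕ, T (stdVec k) = (Real.sqrt (m 1 / 2) : ℂ) •
        ((Real.sqrt (m k / m (k + 1)) : ℂ) • stdVec (k + 1)
          - (Real.sqrt (m (k + 1) / m k) : ℂ) • stdVec k)) :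
    ∀ k : ℕ, 1 ≤ k →
      T ((Real.sqrt (2 / m 1) : ℂ) •
          ∑ i ∈ Finset.range k, ((Real.sqrt (m i * m (i + 1)))⁻¹ : ℂ) • stdVec i)
        = ((m k)⁻¹ : ℂ) • stdVec k - stdVec 0 := by
  intro k _
  have hpos : ∀ k, 0 < m k := fun k => by
    rw [hm]
    exact div_pos (sub_inv_pos_of_one_lt_s8 (one_lt_pow₀ ha k.succ_ne_zero))
      (sub_inv_pos_of_one_lt_s8 ha)
  have hm0 : m 0 = 1 := by
    rw [hm, zero_add, pow_one, div_self (sub_inv_pos_of_one_lt_s8 ha).ne']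
  have hscal : (√(2 / m 1) : ℂ) * √(m 1 / 2) = 1 := by
    have hm1 := hpos 1
    rw [← Complex.ofReal_mul, ← Real.sqrt_mul (by positivity), div_mul_div_comm,
      mul_comm 2 (m 1), div_self (by positivity), Real.sqrt_one, Complex.ofReal_one]
  rw [map_smul, map_sum_inv_sqrt_smul T stdVec _ hpos hT, smul_smul, hscal, one_smul, hm0,
    Complex.ofReal_one, inv_one, one_smul]
end

section
/- Fix a real number a > 1 and define m_k = (a^{k+1} − a^{−(k+1)})/(a − a^{−1}) for k ∈ ℕ. Let T be the bounded operator on ℓ²(ℕ; ℂ) determined by T e_k = √(m_1/2)·(√(m_k/m_{k+1})·e_{k+1} − √(m_{k+1}/m_k)·e_k). Then the series ζ = √(2/m_1)·Σ_{i=0}^∞ e_i/√(m_i·m_{i+1}) converges in ℓ²(ℕ; ℂ) and T ζ = −e_0. -/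
open Filter Topology

noncomputable def quantumDim (a : ℝ) (k : ℕ) : ℝ :=
  (a ^ (k + 1) - (a ^ (k + 1))⁻¹) / (a - a⁻¹)

section quantumDim

variable {a : ℝ}

lemma quantumDim_zero (ha : a - a⁻¹ ≠ 0) : quantumDim a 0 = 1 := by
  simp [quantumDim, div_self ha]

lemma pow_le_quantumDim (ha : 1 < a) (k : ℕ) : a ^ k ≤ quantumDim a k := by
  have ha0 : 0 < a := one_pos.trans ha
  have hden : 0 < a - a⁻¹ := sub_pos.2 ((inv_lt_one_of_one_lt₀ ha).trans ha)
  have hinv : (a ^ (k + 1))⁻¹ ≤ a ^ k * a⁻¹ := by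
    calc (a ^ (k + 1))⁻¹ ≤ a⁻¹ := inv_anti₀ ha0 (le_self_pow₀ ha.le k.succ_ne_zero)
      _ ≤ a ^ k * a⁻¹ := le_mul_of_one_le_left (inv_nonneg.2 ha0.le) (one_le_pow₀ ha.le)
  rw [quantumDim, le_div_iff₀ hden]
  linear_combination hinv

lemma quantumDim_pos (ha : 1 < a) (k : ℕ) : 0 < quantumDim a k :=
  (pow_pos (one_pos.trans ha) k).trans_le (pow_le_quantumDim ha k)

end quantumDim

lemma norm_stdVec (k : ℕ) : ‖stdVec k‖ = 1 := by
  rw [stdVec, lp.norm_single two_pos, norm_one]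

lemma norm_ofReal_smul_stdVec (c : ℝ) (k : ℕ) : ‖(c : ℂ) • stdVec k‖ = |c| := by
  rw [norm_smul, norm_stdVec, mul_one, Complex.norm_real, Real.norm_eq_abs]

lemma eq_neg_of_tendsto_zero_of_hasSum_sub {G : Type*} [AddCommGroup G] [TopologicalSpace G]
    [IsTopologicalAddGroup G] [T2Space G] {g : ℕ → G} {s : G}
    (hg : Tendsto g atTop (𝓝 0)) (hs : HasSum (fun i ↦ g (i + 1) - g i) s) : s = -g 0 := by
  have hpartial := hs.tendsto_sum_nat
  simp_rw [Finset.sum_range_sub g] at hpartial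
  simpa using tendsto_nhds_unique hpartial (hg.sub_const (g 0))

lemma inv_sqrt_mul_le_inv_pow {a : ℝ} (ha : 1 ≤ a) {m : ℕ → ℝ} (hm : ∀ k, a ^ k ≤ m k)
    (i : ℕ) : 1 / Real.sqrt (m i * m (i + 1)) ≤ a⁻¹ ^ i := by
  have hai : 0 < a ^ i := pow_pos (one_pos.trans_le ha) i
  have hsq : a ^ i ≤ Real.sqrt (m i * m (i + 1)) := by
    refine Real.le_sqrt_of_sq_le ?_
    rw [sq]
    exact mul_le_mul (hm i) ((pow_le_pow_right₀ ha i.le_succ).trans (hm (i + 1))) hai.le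
      (hai.le.trans (hm i))
  rw [inv_pow, one_div]
  exact inv_anti₀ hai hsq

lemma sqrt_div_div_sqrt_mul_mul_sqrt_div {u v p q : ℝ} (hu : 0 < u) (hv : 0 < v) (hp : 0 < p)
    (hq : 0 < q) :
    Real.sqrt (u / v) / Real.sqrt (p * q) * (Real.sqrt (v / u) * Real.sqrt (p / q)) = q⁻¹ := by
  rw [div_mul_eq_mul_div, ← Real.sqrt_mul (by positivity), ← Real.sqrt_mul (by positivity),
    ← Real.sqrt_div (by positivity),
    show u / v * (v / u * (p / q)) / (p * q) = q⁻¹ ^ 2 by field_simp]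
  exact Real.sqrt_sq (by positivity)

lemma ofReal_smul_sqrt_smul_sub {E : Type*} [AddCommGroup E] [Module ℂ E] {m : ℕ → ℝ}
    (hm : ∀ k, 0 < m k) (e : ℕ → E) (i : ℕ) :
    ((Real.sqrt (2 / m 1) / Real.sqrt (m i * m (i + 1)) : ℝ) : ℂ) •
        ((Real.sqrt (m 1 / 2) : ℂ) • ((Real.sqrt (m i / m (i + 1)) : ℂ) • e (i + 1)
          - (Real.sqrt (m (i + 1) / m i) : ℂ) • e i)) =
      (((m (i + 1))⁻¹ : ℝ) : ℂ) • e (i + 1) - (((m i)⁻¹ : ℝ) : ℂ) • e i := by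
  have hnext := sqrt_div_div_sqrt_mul_mul_sqrt_div two_pos (hm 1) (hm i) (hm (i + 1))
  have hprev := sqrt_div_div_sqrt_mul_mul_sqrt_div two_pos (hm 1) (hm (i + 1)) (hm i)
  rw [mul_comm (m (i + 1))] at hprev
  simp only [smul_sub, smul_smul, ← Complex.ofReal_mul, hnext, hprev]

/-- **The fixed vector of the path cocycle of `A_o(Q)`** (formula (5) of Section 4.1 and
Theorem 4.2 of the paper).
Fix `a > 1`, let `m_k = (a^{k+1} − a^{−(k+1)})/(a − a^{−1})`, and let `T` be the bounded
operator on `ℓ²(ℕ; ℂ)` with `T e_k = √(m₁/2)·(√(m_k/m_{k+1})·e_{k+1} − √(m_{k+1}/m_k)·e_k)`.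
Then the series `ζ = √(2/m₁)·Σ_{i≥0} e_i/√(m_i·m_{i+1})` converges in `ℓ²(ℕ; ℂ)` and
`T ζ = −e_0`. -/
theorem stmt_9 (a : ℝ) (ha : 1 < a) (m : ℕ → ℝ)
    (hm : ∀ k : ℕ, m k = (a ^ (k + 1) - (a ^ (k + 1))⁻¹) / (a - a⁻¹))
    (T : L2N →L[ℂ] L2N)
    (hT : ∀ k : ℕ, T (stdVec k) = (Real.sqrt (m 1 / 2) : ℂ) •
        ((Real.sqrt (m k / m (k + 1)) : ℂ) • stdVec (k + 1)
          - (Real.sqrt (m (k + 1) / m k) : ℂ) • stdVec k)) :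
    ∃ ζ : L2N,
      HasSum (fun i : ℕ =>
        ((Real.sqrt (2 / m 1) / Real.sqrt (m i * m (i + 1)) : ℝ) : ℂ) • stdVec i) ζ ∧
      T ζ = -stdVec 0 := by
  obtain rfl : m = quantumDim a := funext hm
  have hinv : a⁻¹ < 1 := inv_lt_one_of_one_lt₀ ha
  have hsum : Summable fun i : ℕ ↦
      ((Real.sqrt (2 / quantumDim a 1) / Real.sqrt (quantumDim a i * quantumDim a (i + 1)) : ℝ)
        : ℂ) • stdVec i := by
    refine Summable.of_norm_bounded
      ((summable_geometric_of_lt_one (by positivity) hinv).mul_left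
        (Real.sqrt (2 / quantumDim a 1))) fun i ↦ ?_
    rw [norm_ofReal_smul_stdVec, abs_of_nonneg (by positivity), div_eq_mul_one_div]
    exact mul_le_mul_of_nonneg_left (inv_sqrt_mul_le_inv_pow ha.le (pow_le_quantumDim ha) i)
      (Real.sqrt_nonneg _)
  refine ⟨_, hsum.hasSum, ?_⟩
  have hTζ := T.hasSum hsum.hasSum
  simp only [map_smul, hT, ofReal_smul_sqrt_smul_sub (quantumDim_pos ha)] at hTζ
  have hdecay : Tendsto (fun n ↦ (((quantumDim a n)⁻¹ : ℝ) : ℂ) • stdVec n) atTop (𝓝 0) := by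
    refine squeeze_zero_norm (fun n ↦ ?_) (tendsto_pow_atTop_nhds_zero_of_lt_one
      (by positivity) hinv)
    rw [norm_ofReal_smul_stdVec, abs_of_pos (inv_pos.2 (quantumDim_pos ha n)), inv_pow]
    exact inv_anti₀ (by positivity) (pow_le_quantumDim ha n)
  rw [eq_neg_of_tendsto_zero_of_hasSum_sub hdecay hTζ, quantumDim_zero (sub_pos.2 (hinv.trans ha)).ne']
  simp
end
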